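/- arXiv:2012.06244 — 6 statements merged into one kernel-verified Lean document; each statement's English description precedes it below -/
import Mathlib

section
/- Let f : ℝ → ℝ be defined by f(x) = −log(log(1 + exp(−x))) (so that the logistic loss ℓ(x) = log(1 + exp(−x)) equals exp(−f(x))). Then f is differentiable on ℝ, its derivative is strictly positive at every point (hence f is strictly increasing and injective), and f(x)/x → 1 as x → +∞. -/
/-!
Writing `t = exp (-x)`, the derivative of `f = -log ℓ` is `t / ((1 + t) ℓ)`, which is positive
since `ℓ = log (1 + t) > 0`. The elementary bounds `t / (1 + t) ≤ log (1 + t) ≤ t` give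
`x ≤ f x ≤ x + ℓ x ≤ x + exp (-x)`, so `f x - x` is bounded on `[0, ∞)` and `f x / x → 1`.
-/

open Real Filter Topology Asymptotics

noncomputable def logisticLoss (x : ℝ) : ℝ := log (1 + exp (-x))

theorem tendsto_div_self_atTop_of_sub_isBigO_one {g : ℝ → ℝ}
    (h : (fun x => g x - x) =O[atTop] (fun _ => (1 : ℝ))) :
    Tendsto (fun x => g x / x) atTop (𝓝 1) :=
  (isEquivalent_iff_tendsto_one (v := id) (eventually_ne_atTop 0)).mp
    (h.trans_isLittleO (isLittleO_const_id_atTop 1))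

theorem one_add_exp_neg_pos (x : ℝ) : 0 < 1 + exp (-x) := by positivity

theorem logisticLoss_pos (x : ℝ) : 0 < logisticLoss x :=
  log_pos (by linarith [exp_pos (-x)])

theorem logisticLoss_le_exp_neg (x : ℝ) : logisticLoss x ≤ exp (-x) := by
  unfold logisticLoss
  linarith [log_le_sub_one_of_pos (one_add_exp_neg_pos x)]

theorem exp_neg_div_le_logisticLoss (x : ℝ) : exp (-x) / (1 + exp (-x)) ≤ logisticLoss x := by
  have h := one_sub_inv_le_log_of_pos (one_add_exp_neg_pos x)
  have h' : 1 - (1 + exp (-x))⁻¹ = exp (-x) / (1 + exp (-x)) := by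
    field_simp [(one_add_exp_neg_pos x).ne']
    ring
  rwa [h'] at h

theorem hasDerivAt_logisticLoss (x : ℝ) :
    HasDerivAt logisticLoss (-exp (-x) / (1 + exp (-x))) x := by
  have h := ((hasDerivAt_exp (-x)).comp x (hasDerivAt_neg x)).const_add 1
  simp only [mul_neg, mul_one] at h
  exact h.log (one_add_exp_neg_pos x).ne'

theorem hasDerivAt_neg_log_logisticLoss (x : ℝ) :
    HasDerivAt (fun y => -log (logisticLoss y))
      (exp (-x) / ((1 + exp (-x)) * logisticLoss x)) x := by
  refine ((hasDerivAt_logisticLoss x).log (logisticLoss_pos x).ne').neg.congr_deriv ?_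
  rw [neg_div, neg_div, neg_neg, div_div]

theorem le_neg_log_logisticLoss (x : ℝ) : x ≤ -log (logisticLoss x) := by
  have h := log_le_log (logisticLoss_pos x) (logisticLoss_le_exp_neg x)
  rw [log_exp] at h
  linarith

theorem neg_log_logisticLoss_le (x : ℝ) : -log (logisticLoss x) ≤ x + logisticLoss x := by
  have h := log_le_log (by positivity) (exp_neg_div_le_logisticLoss x)
  rw [log_div (exp_pos _).ne' (one_add_exp_neg_pos x).ne', log_exp] at h
  unfold logisticLoss at *
  linarith

theorem abs_neg_log_logisticLoss_sub_le_one {x : ℝ} (hx : 0 ≤ x) :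
    |-log (logisticLoss x) - x| ≤ 1 := by
  have := le_neg_log_logisticLoss x
  have := neg_log_logisticLoss_le x
  have := (logisticLoss_le_exp_neg x).trans (exp_le_one_iff.mpr (neg_nonpos.mpr hx))
  rw [abs_le]
  constructor <;> linarith

theorem deriv_neg_log_logisticLoss_pos (x : ℝ) :
    0 < deriv (fun y => -log (logisticLoss y)) x := by
  rw [(hasDerivAt_neg_log_logisticLoss x).deriv]
  have := logisticLoss_pos x
  have := one_add_exp_neg_pos x
  positivity

/-- The function `f(x) = -log(log(1 + exp(-x)))` associated to the logistic loss
`ℓ(x) = log(1 + exp(-x)) = exp(-f x)` is differentiable, has strictly positive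
derivative everywhere (hence is strictly increasing and injective), and satisfies
`f(x)/x → 1` as `x → +∞`. -/
theorem logistic_loss_f_properties (f : ℝ → ℝ)
    (hf : ∀ x, f x = -Real.log (Real.log (1 + Real.exp (-x)))) :
    Differentiable ℝ f ∧ (∀ x, 0 < deriv f x) ∧ StrictMono f ∧ Function.Injective f ∧
      Filter.Tendsto (fun x => f x / x) Filter.atTop (nhds 1) := by
  obtain rfl : f = fun x => -log (logisticLoss x) := funext hf
  have hmono := strictMono_of_deriv_pos deriv_neg_log_logisticLoss_pos
  refine ⟨fun x => (hasDerivAt_neg_log_logisticLoss x).differentiableAt,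
    deriv_neg_log_logisticLoss_pos, hmono, hmono.injective,
    tendsto_div_self_atTop_of_sub_isBigO_one (IsBigO.of_bound 1 ?_)⟩
  filter_upwards [eventually_ge_atTop 0] with x hx
  simpa using abs_neg_log_logisticLoss_sub_le_one hx
end

section
/- Let p ≥ 1, let L : ℝ^p → ℝ be continuously differentiable and nonnegative, let ε > 0, and let w : [0,∞) → ℝ^p be a differentiable curve satisfying, for every coordinate j and every t ≥ 0, w_j'(t) = −h_j(t) · ∂_j L(w(t)), where h_j(t) = (ε + ∫₀^t (∂_j L(w(τ)))² dτ)^{−1/2} (the AdaGrad flow). Then for every coordinate j, ∫₀^∞ (∂_j L(w(t)))² dt < ∞; consequently h_j(t) converges as t → ∞ to a strictly positive limit h_{∞,j} = (ε + ∫₀^∞ (∂_j L(w(τ)))² dτ)^{−1/2} > 0. -/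
/-!
Writing `gₖ(t) = ∂ₖL(w t)`, the quantity `E(t) = L(w t) + 2 ∑ₖ √(ε + ∫₀ᵗ gₖ²)` is conserved
along the flow: the derivative of `2 √(ε + ∫₀ᵗ gₖ²)` is `gₖ² / √(ε + ∫₀ᵗ gₖ²) = -gₖ wₖ'`,
and these terms sum to `-(L ∘ w)'` by the chain rule. Since `L ≥ 0`, every accumulated squared gradient stays below
`(L(w 0)/2 + p √ε)²`, so the nonnegative integrand is integrable on `[0, ∞)`, and the
conditioner converges by continuity of `y ↦ 1 / √(ε + y)` at the (positive) limit.
-/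

open MeasureTheory Filter Set Topology

section SetIntegralIcc

variable {E : Type*} [NormedAddCommGroup E] [NormedSpace ℝ E] {f : ℝ → E} {a : ℝ}

theorem setIntegral_Icc_eq_intervalIntegral {b : ℝ} (hab : a ≤ b) :
    ∫ τ in Icc a b, f τ = ∫ τ in a..b, f τ := by
  rw [intervalIntegral.integral_of_le hab, integral_Icc_eq_integral_Ioc]

theorem tendsto_setIntegral_Icc_atTop (hf : IntegrableOn f (Ici a)) :
    Tendsto (fun t => ∫ τ in Icc a t, f τ) atTop (𝓝 (∫ τ in Ici a, f τ)) := by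
  rw [← iUnion_Icc_right a] at hf ⊢
  exact tendsto_setIntegral_of_monotone (fun _ => measurableSet_Icc)
    (fun _ _ h => Icc_subset_Icc_right h) hf

theorem hasDerivWithinAt_setIntegral_Icc [CompleteSpace E] (hf : ContinuousOn f (Ici a))
    {x : ℝ} (hx : a ≤ x) :
    HasDerivWithinAt (fun t => ∫ τ in Icc a t, f τ) (f x) (Ici x) x := by
  have hsub : Ioi x ⊆ Ici a := fun y hy => hx.trans hy.le
  have hprim : HasDerivWithinAt (fun t => ∫ τ in a..t, f τ) (f x) (Ici x) x :=
    intervalIntegral.integral_hasDerivWithinAt_right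
      ((hf.mono Icc_subset_Ici_self).intervalIntegrable_of_Icc hx)
      ⟨Ici a, mem_of_superset self_mem_nhdsWithin hsub,
        hf.aestronglyMeasurable measurableSet_Ici⟩
      ((hf x hx).mono hsub)
  exact hprim.congr (fun t ht => setIntegral_Icc_eq_intervalIntegral (hx.trans ht))
    (setIntegral_Icc_eq_intervalIntegral hx)

end SetIntegralIcc

theorem integrableOn_Ici_of_setIntegral_Icc_le {f : ℝ → ℝ} {a C : ℝ} (hf0 : ∀ t, 0 ≤ f t)
    (hfi : ∀ t, IntegrableOn f (Icc a t)) (hC : ∀ t, a ≤ t → ∫ τ in Icc a t, f τ ≤ C) :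
    IntegrableOn f (Ici a) := by
  rw [integrableOn_Ici_iff_integrableOn_Ioi]
  refine integrableOn_Ioi_of_intervalIntegral_norm_bounded C a
    (fun t => (hfi t).mono_set Ioc_subset_Icc_self) tendsto_id ?_
  filter_upwards [eventually_ge_atTop a] with t ht
  simp_rw [Real.norm_of_nonneg (hf0 _), ← setIntegral_Icc_eq_intervalIntegral ht]
  exact hC t ht

theorem tendsto_one_div_sqrt_add_setIntegral_Icc {f : ℝ → ℝ} {a ε : ℝ}
    (hf : IntegrableOn f (Ici a)) (hpos : 0 < ε + ∫ τ in Ici a, f τ) :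
    Tendsto (fun t => 1 / √(ε + ∫ τ in Icc a t, f τ)) atTop
      (𝓝 (1 / √(ε + ∫ τ in Ici a, f τ))) := by
  have hcont : ContinuousAt (fun y => 1 / √(ε + y)) (∫ τ in Ici a, f τ) := by
    have : √(ε + ∫ τ in Ici a, f τ) ≠ 0 := (Real.sqrt_pos.2 hpos).ne'
    fun_prop (disch := assumption)
  exact hcont.tendsto.comp (tendsto_setIntegral_Icc_atTop hf)

theorem hasDerivWithinAt_piLp {𝕜 ι : Type*} [NontriviallyNormedField 𝕜] [Fintype ι]
    {q : ENNReal} [Fact (1 ≤ q)] {E : ι → Type*} [∀ i, NormedAddCommGroup (E i)]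
    [∀ i, NormedSpace 𝕜 (E i)] {φ : 𝕜 → PiLp q E} {φ' : PiLp q E} {s : Set 𝕜} {x : 𝕜} :
    HasDerivWithinAt φ φ' s x ↔ ∀ i, HasDerivWithinAt (fun t => φ t i) (φ' i) s x := by
  simp only [hasDerivWithinAt_iff_hasFDerivWithinAt, hasFDerivWithinAt_piLp]
  rfl

theorem ContinuousLinearMap.apply_eq_sum_euclideanSpace_single {𝕜 ι F : Type*} [RCLike 𝕜]
    [Fintype ι] [DecidableEq ι] [AddCommGroup F] [Module 𝕜 F] [TopologicalSpace F]
    (φ : EuclideanSpace 𝕜 ι →L[𝕜] F) (u : EuclideanSpace 𝕜 ι) :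
    φ u = ∑ i, u i • φ (EuclideanSpace.single i 1) := by
  conv_lhs => rw [← (EuclideanSpace.basisFun ι 𝕜).toBasis.sum_repr u]
  simp

section AdaGradFlow

variable {p : ℕ} {L : EuclideanSpace ℝ (Fin p) → ℝ} {w : ℝ → EuclideanSpace ℝ (Fin p)}
  {ε : ℝ}

noncomputable def partialAlong (L : EuclideanSpace ℝ (Fin p) → ℝ)
    (w : ℝ → EuclideanSpace ℝ (Fin p)) (j : Fin p) (t : ℝ) : ℝ :=
  fderiv ℝ L (w t) (EuclideanSpace.single j 1)

noncomputable def accumulatedSqGrad (L : EuclideanSpace ℝ (Fin p) → ℝ)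
    (w : ℝ → EuclideanSpace ℝ (Fin p)) (j : Fin p) (t : ℝ) : ℝ :=
  ∫ τ in Icc 0 t, partialAlong L w j τ ^ 2

def IsAdaGradFlow (L : EuclideanSpace ℝ (Fin p) → ℝ) (ε : ℝ)
    (w : ℝ → EuclideanSpace ℝ (Fin p)) : Prop :=
  ∀ j, ∀ t ∈ Ici (0 : ℝ), HasDerivWithinAt (fun s => w s j)
    (-(1 / √(ε + accumulatedSqGrad L w j t)) * partialAlong L w j t) (Ici 0) t

noncomputable def adagradEnergy (L : EuclideanSpace ℝ (Fin p) → ℝ) (ε : ℝ)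
    (w : ℝ → EuclideanSpace ℝ (Fin p)) (t : ℝ) : ℝ :=
  L (w t) + ∑ k, 2 * √(ε + accumulatedSqGrad L w k t)

theorem accumulatedSqGrad_nonneg (j : Fin p) (t : ℝ) : 0 ≤ accumulatedSqGrad L w j t :=
  setIntegral_nonneg measurableSet_Icc fun _ _ => sq_nonneg _

theorem accumulatedSqGrad_zero (j : Fin p) : accumulatedSqGrad L w j 0 = 0 := by
  simp [accumulatedSqGrad]

namespace IsAdaGradFlow

theorem hasDerivWithinAt (hw : IsAdaGradFlow L ε w) {t : ℝ} (ht : 0 ≤ t) :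
    HasDerivWithinAt w (WithLp.toLp 2 fun k =>
      -(1 / √(ε + accumulatedSqGrad L w k t)) * partialAlong L w k t) (Ici 0) t :=
  hasDerivWithinAt_piLp.2 fun k => hw k t ht

theorem continuousOn (hw : IsAdaGradFlow L ε w) : ContinuousOn w (Ici 0) :=
  fun _ ht => (hw.hasDerivWithinAt ht).continuousWithinAt

theorem continuousOn_partialAlong_sq (hw : IsAdaGradFlow L ε w) (hL : ContDiff ℝ 1 L)
    (j : Fin p) :
    ContinuousOn (fun t => partialAlong L w j t ^ 2) (Ici 0) :=
  (((hL.continuous_fderiv one_ne_zero).clm_apply continuous_const).comp_continuousOn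
    hw.continuousOn).pow 2

theorem continuousOn_adagradEnergy (hw : IsAdaGradFlow L ε w) (hL : ContDiff ℝ 1 L)
    (b : ℝ) :
    ContinuousOn (adagradEnergy L ε w) (Icc 0 b) := by
  have hG : ∀ k, ContinuousOn (accumulatedSqGrad L w k) (Icc 0 b) := fun k =>
    intervalIntegral.continuousOn_primitive_Icc
      (((hw.continuousOn_partialAlong_sq hL k).mono Icc_subset_Ici_self).integrableOn_compact
        isCompact_Icc)
  have hLw : ContinuousOn (fun t => L (w t)) (Icc 0 b) :=
    hL.continuous.comp_continuousOn (hw.continuousOn.mono Icc_subset_Ici_self)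
  exact hLw.add (continuousOn_finsetSum _ fun k _ =>
    continuousOn_const.mul ((hG k).const_add ε).sqrt)

theorem hasDerivWithinAt_adagradEnergy (hw : IsAdaGradFlow L ε w) (hL : ContDiff ℝ 1 L)
    (hε : 0 < ε) {x : ℝ} (hx : 0 ≤ x) : HasDerivWithinAt (adagradEnergy L ε w) 0 (Ici x) x := by
  have hGpos : ∀ k, 0 < ε + accumulatedSqGrad L w k x := fun k =>
    add_pos_of_pos_of_nonneg hε (accumulatedSqGrad_nonneg k x)
  have hloss := (hL.differentiable one_ne_zero (w x)).hasFDerivAt.comp_hasDerivWithinAt x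
    ((hw.hasDerivWithinAt hx).mono (Ici_subset_Ici.2 hx))
  have hroot : ∀ k, HasDerivWithinAt (fun t => 2 * √(ε + accumulatedSqGrad L w k t))
      (2 * (partialAlong L w k x ^ 2 / (2 * √(ε + accumulatedSqGrad L w k x)))) (Ici x) x :=
    fun k => (((hasDerivWithinAt_setIntegral_Icc (hw.continuousOn_partialAlong_sq hL k)
      hx).const_add ε).sqrt (hGpos k).ne').const_mul 2
  refine (hloss.add (HasDerivWithinAt.fun_sum fun k _ => hroot k)).congr_deriv ?_
  rw [ContinuousLinearMap.apply_eq_sum_euclideanSpace_single, ← Finset.sum_add_distrib]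
  refine Finset.sum_eq_zero fun k _ => ?_
  have := Real.sqrt_pos.2 (hGpos k)
  simp only [smul_eq_mul, partialAlong]
  field_simp
  ring

theorem adagradEnergy_eq (hw : IsAdaGradFlow L ε w) (hL : ContDiff ℝ 1 L) (hε : 0 < ε)
    {t : ℝ} (ht : 0 ≤ t) :
    adagradEnergy L ε w t = L (w 0) + 2 * p * √ε := by
  rw [constant_of_has_deriv_right_zero (hw.continuousOn_adagradEnergy hL t)
    (fun x hx => hw.hasDerivWithinAt_adagradEnergy hL hε hx.1) t ⟨ht, le_rfl⟩]
  simp only [adagradEnergy, accumulatedSqGrad_zero, add_zero, Finset.sum_const,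
    Finset.card_univ, Fintype.card_fin, nsmul_eq_mul, add_right_inj]
  ring

theorem accumulatedSqGrad_le (hw : IsAdaGradFlow L ε w) (hL : ContDiff ℝ 1 L)
    (hL0 : ∀ x, 0 ≤ L x) (hε : 0 < ε) (j : Fin p) {t : ℝ} (ht : 0 ≤ t) :
    accumulatedSqGrad L w j t ≤ (L (w 0) / 2 + p * √ε) ^ 2 := by
  have hroot : 2 * √(ε + accumulatedSqGrad L w j t) ≤ L (w 0) + 2 * p * √ε := by
    calc 2 * √(ε + accumulatedSqGrad L w j t)
        ≤ ∑ k, 2 * √(ε + accumulatedSqGrad L w k t) :=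
          Finset.single_le_sum (f := fun k => 2 * √(ε + accumulatedSqGrad L w k t))
            (fun k _ => by positivity) (Finset.mem_univ j)
      _ ≤ adagradEnergy L ε w t := le_add_of_nonneg_left (hL0 _)
      _ = L (w 0) + 2 * p * √ε := hw.adagradEnergy_eq hL hε ht
  have hsq := Real.sq_sqrt (add_nonneg hε.le (accumulatedSqGrad_nonneg (L := L) (w := w) j t))
  nlinarith [Real.sqrt_nonneg (ε + accumulatedSqGrad L w j t)]

end IsAdaGradFlow

end AdaGradFlow

theorem adagrad_flow_conditioner_converges_general (p : ℕ)
    (L : EuclideanSpace ℝ (Fin p) → ℝ) (hL : ContDiff ℝ 1 L) (hL0 : ∀ x, 0 ≤ L x)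
    (ε : ℝ) (hε : 0 < ε)
    (w : ℝ → EuclideanSpace ℝ (Fin p))
    (hw : ∀ j : Fin p, ∀ t ∈ Set.Ici (0:ℝ),
      HasDerivWithinAt (fun s => w s j)
        (-(1 / Real.sqrt (ε + ∫ τ in Set.Icc (0:ℝ) t,
            (fderiv ℝ L (w τ) (EuclideanSpace.single j 1)) ^ 2)) *
          fderiv ℝ L (w t) (EuclideanSpace.single j 1)) (Set.Ici 0) t) :
    ∀ j : Fin p,
      IntegrableOn
        (fun t => (fderiv ℝ L (w t) (EuclideanSpace.single j 1)) ^ 2) (Set.Ici 0) ∧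
      0 < 1 / Real.sqrt (ε + ∫ τ in Set.Ici (0:ℝ),
            (fderiv ℝ L (w τ) (EuclideanSpace.single j 1)) ^ 2) ∧
      Tendsto
        (fun t => 1 / Real.sqrt (ε + ∫ τ in Set.Icc (0:ℝ) t,
            (fderiv ℝ L (w τ) (EuclideanSpace.single j 1)) ^ 2)) atTop
        (nhds (1 / Real.sqrt (ε + ∫ τ in Set.Ici (0:ℝ),
            (fderiv ℝ L (w τ) (EuclideanSpace.single j 1)) ^ 2))) := by
  intro j
  have hflow : IsAdaGradFlow L ε w := hw
  have hsq := hflow.continuousOn_partialAlong_sq hL j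
  have hint : IntegrableOn (fun t => partialAlong L w j t ^ 2) (Ici 0) :=
    integrableOn_Ici_of_setIntegral_Icc_le (fun _ => sq_nonneg _)
      (fun _ => (hsq.mono Icc_subset_Ici_self).integrableOn_compact isCompact_Icc)
      (fun _ ht => hflow.accumulatedSqGrad_le hL hL0 hε j ht)
  have hpos : 0 < ε + ∫ τ in Ici 0, partialAlong L w j τ ^ 2 :=
    add_pos_of_pos_of_nonneg hε (setIntegral_nonneg measurableSet_Ici fun _ _ => sq_nonneg _)
  exact ⟨hint, by positivity, tendsto_one_div_sqrt_add_setIntegral_Icc hint hpos⟩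

/-- Along the AdaGrad flow `w'(t) = -h(t) ⊙ ∇L(w(t))` with conditioner
`h_j(t) = (ε + ∫₀^t (∂_j L(w τ))² dτ)^{-1/2}`, each squared partial derivative of the
(nonnegative, C¹) loss along the flow is integrable on `[0,∞)`; consequently each
component of the conditioner converges to a strictly positive limit. -/
theorem adagrad_flow_conditioner_converges (p : ℕ) (hp : 1 ≤ p)
    (L : EuclideanSpace ℝ (Fin p) → ℝ) (hL : ContDiff ℝ 1 L) (hL0 : ∀ x, 0 ≤ L x)
    (ε : ℝ) (hε : 0 < ε)
    (w : ℝ → EuclideanSpace ℝ (Fin p))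
    (hw : ∀ j : Fin p, ∀ t ∈ Set.Ici (0:ℝ),
      HasDerivWithinAt (fun s => w s j)
        (-(1 / Real.sqrt (ε + ∫ τ in Set.Icc (0:ℝ) t,
            (fderiv ℝ L (w τ) (EuclideanSpace.single j 1)) ^ 2)) *
          fderiv ℝ L (w t) (EuclideanSpace.single j 1)) (Set.Ici 0) t) :
    ∀ j : Fin p,
      IntegrableOn
        (fun t => (fderiv ℝ L (w t) (EuclideanSpace.single j 1)) ^ 2) (Set.Ici 0) ∧
      0 < 1 / Real.sqrt (ε + ∫ τ in Set.Ici (0:ℝ),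
            (fderiv ℝ L (w τ) (EuclideanSpace.single j 1)) ^ 2) ∧
      Tendsto
        (fun t => 1 / Real.sqrt (ε + ∫ τ in Set.Icc (0:ℝ) t,
            (fderiv ℝ L (w τ) (EuclideanSpace.single j 1)) ^ 2)) atTop
        (nhds (1 / Real.sqrt (ε + ∫ τ in Set.Ici (0:ℝ),
            (fderiv ℝ L (w τ) (EuclideanSpace.single j 1)) ^ 2))) :=
  adagrad_flow_conditioner_converges_general p L hL hL0 ε hε w hw
end

section
/- Let g : [0,∞) → ℝ be continuous with ∫₀^∞ g(t)² dt < ∞, let b ∈ (0,1), ε > 0, and define F(t) = ∫₀^t (1−b) e^{−(1−b)(t−τ)} g(τ)² dτ. Then F is continuously differentiable, and both the positive part and the negative part of the function t ↦ F'(t) / (2(ε + F(t))) (which equals the derivative of t ↦ log √((ε + F(t))/ε)) are Lebesgue integrable on [0,∞): ∫₀^∞ max(0, F'(t)/(2(ε+F(t)))) dt < ∞ and ∫₀^∞ max(0, −F'(t)/(2(ε+F(t)))) dt < ∞. -/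
/-!
On `[0, ∞)` the moving average `F` solves `F' = c (u - F)` with `F(0) = 0`, `F ≥ 0`, where
`c = 1 - b` and `u = g²`. Integrating the equation gives `c ∫₀^T F = c ∫₀^T u - F(T) ≤ c ∫₀^T u`,
so `F` is integrable along with `u`. Since `ε + F ≥ ε`, the ratio `F' / (2(ε + F))` is bounded in
absolute value by `c (u + F) / (2ε)`, hence integrable, and so are its positive and negative parts.
-/

open MeasureTheory Set Real

noncomputable section

def expMovingAverage (c : ℝ) (u : ℝ → ℝ) (t : ℝ) : ℝ :=
  ∫ τ in Icc (0 : ℝ) t, c * exp (-c * (t - τ)) * u τ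

namespace expMovingAverage

variable {c : ℝ} {u : ℝ → ℝ}

theorem eq_mul_intervalIntegral {t : ℝ} (ht : 0 ≤ t) :
    expMovingAverage c u t = c * exp (-c * t) * ∫ τ in (0 : ℝ)..t, exp (c * τ) * u τ := by
  rw [expMovingAverage, integral_Icc_eq_integral_Ioc, ← intervalIntegral.integral_of_le ht,
    ← intervalIntegral.integral_const_mul]
  refine intervalIntegral.integral_congr fun τ _ => ?_
  rw [show -c * (t - τ) = -c * t + c * τ by ring, exp_add]
  ring

theorem apply_zero : expMovingAverage c u 0 = 0 := by
  simp [expMovingAverage]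

theorem nonneg (hc : 0 ≤ c) (hu : ∀ t, 0 ≤ u t) (t : ℝ) : 0 ≤ expMovingAverage c u t :=
  setIntegral_nonneg measurableSet_Icc fun τ _ => by have := hu τ; positivity

theorem hasDerivWithinAt (hu : Continuous u) {t : ℝ} (ht : 0 ≤ t) :
    HasDerivWithinAt (expMovingAverage c u) (c * (u t - expMovingAverage c u t)) (Ici 0) t := by
  set G : ℝ → ℝ := fun s => ∫ τ in (0 : ℝ)..s, exp (c * τ) * u τ
  have hG : HasDerivAt G (exp (c * t) * u t) t :=
    ((by fun_prop : Continuous fun τ => exp (c * τ) * u τ).integral_hasStrictDerivAt 0 t).hasDerivAt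
  have hexp : HasDerivAt (fun s => exp (-c * s)) (exp (-c * t) * -c) t := by
    simpa using ((hasDerivAt_id t).const_mul (-c)).exp
  have hinv : exp (-c * t) * exp (c * t) = 1 := by rw [← exp_add]; simp
  have hderiv : c * (exp (-c * t) * -c) * G t + c * exp (-c * t) * (exp (c * t) * u t)
      = c * (u t - expMovingAverage c u t) := by
    rw [eq_mul_intervalIntegral ht]
    linear_combination (c * u t) * hinv
  rw [← hderiv]
  exact ((hexp.const_mul c).mul hG).hasDerivWithinAt.congr
    (fun s hs => eq_mul_intervalIntegral hs) (eq_mul_intervalIntegral ht)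

theorem continuousOn (hu : Continuous u) : ContinuousOn (expMovingAverage c u) (Ici 0) :=
  fun _ ht => (hasDerivWithinAt hu ht).continuousWithinAt

theorem intervalIntegral_le (hc : 0 < c) (hu : Continuous u) (hu0 : ∀ t, 0 ≤ u t)
    {T : ℝ} (hT : 0 ≤ T) :
    ∫ t in (0 : ℝ)..T, expMovingAverage c u t ≤ ∫ t in (0 : ℝ)..T, u t := by
  have hsub : uIcc 0 T ⊆ Ici (0 : ℝ) := by rw [uIcc_of_le hT]; exact fun _ h => h.1
  have hFi : IntervalIntegrable (expMovingAverage c u) volume 0 T :=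
    ((continuousOn hu).mono hsub).intervalIntegrable
  have hui : IntervalIntegrable u volume 0 T := hu.intervalIntegrable 0 T
  have hftc : ∫ t in (0 : ℝ)..T, c * (u t - expMovingAverage c u t)
      = expMovingAverage c u T := by
    rw [intervalIntegral.integral_eq_sub_of_hasDeriv_right_of_le hT
      ((continuousOn hu).mono fun _ h => h.1)
      (fun t ht => (hasDerivWithinAt hu ht.1.le).mono fun _ hs => ht.1.le.trans hs.le)
      ((hui.sub hFi).const_mul c), apply_zero, sub_zero]
  rw [intervalIntegral.integral_const_mul, intervalIntegral.integral_sub hui hFi] at hftc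
  nlinarith [nonneg hc.le hu0 T]

theorem integrableOn (hc : 0 < c) (hu : Continuous u) (hu0 : ∀ t, 0 ≤ u t)
    (hui : IntegrableOn u (Ici 0)) : IntegrableOn (expMovingAverage c u) (Ici 0) := by
  rw [integrableOn_Ici_iff_integrableOn_Ioi]
  refine integrableOn_Ioi_of_intervalIntegral_norm_bounded (∫ t in Ici 0, u t) 0
    (fun i => ((continuousOn hu).mono fun _ h => h.1).integrableOn_Icc.mono_set
      Ioc_subset_Icc_self) Filter.tendsto_id ?_
  filter_upwards [Filter.eventually_ge_atTop 0] with T hT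
  calc ∫ t in (0 : ℝ)..T, ‖expMovingAverage c u t‖
      = ∫ t in (0 : ℝ)..T, expMovingAverage c u t :=
        intervalIntegral.integral_congr fun t _ => norm_of_nonneg (nonneg hc.le hu0 t)
    _ ≤ ∫ t in (0 : ℝ)..T, u t := intervalIntegral_le hc hu hu0 hT
    _ ≤ ∫ t in Ici 0, u t := by
        rw [intervalIntegral.integral_of_le hT]
        exact setIntegral_mono_set hui (.of_forall hu0) (.of_forall fun _ h => h.1.le)

end expMovingAverage

theorem abs_mul_sub_div_le {c ε u F : ℝ} (hc : 0 ≤ c) (hε : 0 < ε) (hu : 0 ≤ u) (hF : 0 ≤ F) :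
    |c * (u - F) / (2 * (ε + F))| ≤ c / (2 * ε) * (u + F) := by
  rw [abs_div, abs_mul, abs_of_nonneg hc, abs_of_pos (by positivity : 0 < 2 * (ε + F)),
    div_mul_eq_mul_div]
  have hsub : |u - F| ≤ u + F := by rw [abs_le]; constructor <;> linarith
  exact div_le_div₀ (by positivity) (mul_le_mul_of_nonneg_left hsub hc) (by positivity)
    (by linarith)

theorem integrableOn_deriv_div_expMovingAverage {c ε : ℝ} {u : ℝ → ℝ} (hc : 0 < c) (hε : 0 < ε)
    (hu : Continuous u) (hu0 : ∀ t, 0 ≤ u t) (hui : IntegrableOn u (Ici 0)) :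
    IntegrableOn (fun t => c * (u t - expMovingAverage c u t) /
      (2 * (ε + expMovingAverage c u t))) (Ici 0) := by
  have hF0 := expMovingAverage.nonneg hc.le hu0
  have hFc := expMovingAverage.continuousOn (c := c) hu
  have hcont : ContinuousOn (fun t => c * (u t - expMovingAverage c u t) /
      (2 * (ε + expMovingAverage c u t))) (Ici 0) :=
    (continuousOn_const.mul (hu.continuousOn.sub hFc)).div
      (continuousOn_const.mul (continuousOn_const.add hFc))
      fun t _ => by have := hF0 t; positivity
  refine Integrable.mono' ((hui.add (expMovingAverage.integrableOn hc hu hu0 hui)).const_mul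
    (c / (2 * ε))) (hcont.aestronglyMeasurable measurableSet_Ici) (.of_forall fun t => ?_)
  exact abs_mul_sub_div_le hc.le hε (hu0 t) (hF0 t)

/-- For continuous `g` with `∫₀^∞ g² < ∞` and the exponential moving average
`F(t) = ∫₀^t (1-b) e^{-(1-b)(t-τ)} g(τ)² dτ`, the function `F` is continuously
differentiable on `[0,∞)` with derivative `F'(t) = (1-b)(g(t)² - F(t))`, and both the
positive and the negative part of `t ↦ F'(t)/(2(ε + F(t)))` (the derivative of
`t ↦ log √((ε+F(t))/ε)`) are Lebesgue integrable on `[0,∞)`. -/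
theorem rmsprop_log_learning_rate_integrable (g : ℝ → ℝ) (hg_cont : Continuous g)
    (hg_int : IntegrableOn (fun t => (g t) ^ 2) (Set.Ici 0))
    (b : ℝ) (hb : b ∈ Set.Ioo (0:ℝ) 1) (ε : ℝ) (hε : 0 < ε)
    (F : ℝ → ℝ)
    (hF : ∀ t, F t = ∫ τ in Set.Icc (0:ℝ) t,
      (1 - b) * Real.exp (-(1 - b) * (t - τ)) * (g τ) ^ 2) :
    (∀ t ∈ Set.Ici (0:ℝ),
      HasDerivWithinAt F ((1 - b) * ((g t) ^ 2 - F t)) (Set.Ici 0) t) ∧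
    ContinuousOn (fun t => (1 - b) * ((g t) ^ 2 - F t)) (Set.Ici 0) ∧
    IntegrableOn
      (fun t => max 0 (((1 - b) * ((g t) ^ 2 - F t)) / (2 * (ε + F t)))) (Set.Ici 0) ∧
    IntegrableOn
      (fun t => max 0 (-(((1 - b) * ((g t) ^ 2 - F t)) / (2 * (ε + F t))))) (Set.Ici 0) := by
  obtain rfl : F = expMovingAverage (1 - b) (fun τ => g τ ^ 2) := funext hF
  have hc : 0 < 1 - b := sub_pos.2 hb.2
  have hu : Continuous fun t => g t ^ 2 := hg_cont.pow 2
  have hratio := integrableOn_deriv_div_expMovingAverage hc hε hu (fun t => sq_nonneg (g t)) hg_int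
  refine ⟨fun t ht => expMovingAverage.hasDerivWithinAt hu ht,
    continuousOn_const.mul (hu.continuousOn.sub (expMovingAverage.continuousOn hu)), ?_, ?_⟩
  · exact (integrable_zero _ _ _).sup hratio
  · exact (integrable_zero _ _ _).sup hratio.neg
end
end

section
/- Consider the adaptive gradient flow for the exponential-loss empirical risk with the separability assumption. Define the surrogate norm ρ(t) = ‖β(t)^{−1/2} ⊙ v(t)‖ and the surrogate margin γ̃(t) = log(1/L̃(v(t))) / ρ(t)^L. Then there exists a time t₁ ≥ t₀ such that for all t ≥ t₁, γ̃(t) ≥ e^{−1/2} · γ̃(t₁). -/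
open MeasureTheory Filter Set Real Topology

/-!
Write `a = log (1 / L̃(v))` and `ρ² = ∑ v_j² / β_j`, so that `log γ̃ = log a - (L/2) log ρ²`.
Once `L̃(v) < 1`, this has derivative at least `-(L/2) ∑ |β_j'/β_j|`: the loss decreases,
`a' = ∑ β_j (∂_j L̃)² / L̃`, and Euler's identity `⟨v, ∇L̃(v)⟩ = -L ∑ q_i e^{-q_i}` gives
`(ρ²)' = 2L ∑ q_i e^{-q_i}` up to an error at most `ρ² ∑ |β_j'/β_j|`. Cauchy–Schwarz in the
`β`-weighted inner product and `∑ q_i e^{-q_i} ≥ a L̃` show that `a'/a` dominates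
`(L/2) · 2L ∑ q_i e^{-q_i} / ρ²`. Since `β_j'/β_j` is integrable, after some time `t₁` the
remaining error integrates to at most `1/2`, which costs at most the factor `e^{-1/2}`.
-/

section Homogeneous

variable {E : Type*} [NormedAddCommGroup E] [NormedSpace ℝ E] {f : E → ℝ} {L : ℝ}

theorem map_zero_of_homogeneous (hL : L ≠ 0)
    (hf : ∀ α : ℝ, 0 < α → ∀ x, f (α • x) = α ^ L * f x) : f 0 = 0 := by
  have h := hf 2 two_pos 0
  rw [smul_zero] at h
  have h2 : (2 : ℝ) ^ L ≠ 1 := by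
    simpa using (rpow_right_inj two_pos (by norm_num : (2 : ℝ) ≠ 1) (y := L) (z := 0)).not.2 hL
  have : ((2 : ℝ) ^ L - 1) * f 0 = 0 := by linarith
  exact (mul_eq_zero.1 this).resolve_left (sub_ne_zero.2 h2)

theorem fderiv_apply_self_of_homogeneous
    (hf : ∀ α : ℝ, 0 < α → ∀ x, f (α • x) = α ^ L * f x) {x : E}
    (hx : DifferentiableAt ℝ f x) : fderiv ℝ f x x = L * f x := by
  have hray : HasDerivAt (fun α : ℝ => f (α • x)) (fderiv ℝ f x x) 1 := by
    have hline : HasDerivAt (fun α : ℝ => α • x) x 1 := by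
      simpa using (hasDerivAt_id (1 : ℝ)).smul_const x
    exact hx.hasFDerivAt.comp_hasDerivAt_of_eq (1 : ℝ) hline (one_smul ℝ x).symm
  have hpow : HasDerivAt (fun α : ℝ => α ^ L * f x) (L * f x) 1 := by
    simpa using (hasDerivAt_rpow_const (x := 1) (p := L) (Or.inl one_ne_zero)).mul_const (f x)
  have heq : (fun α : ℝ => f (α • x)) =ᶠ[𝓝 1] fun α => α ^ L * f x :=
    eventually_of_mem (Ioi_mem_nhds one_pos) fun α hα => hf α hα x
  exact (hray.congr_of_eventuallyEq heq.symm).unique hpow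

end Homogeneous

section ExpLoss

variable {ι E : Type*} [Fintype ι] {q : ι → E → ℝ} {x : E}

noncomputable def expLoss (q : ι → E → ℝ) (x : E) : ℝ := ∑ i, exp (-q i x)

theorem hasFDerivAt_expLoss [NormedAddCommGroup E] [NormedSpace ℝ E]
    (hq : ∀ i, DifferentiableAt ℝ (q i) x) :
    HasFDerivAt (expLoss q) (∑ i, (-exp (-q i x)) • fderiv ℝ (q i) x) x := by
  refine HasFDerivAt.fun_sum fun i _ => ?_
  simpa [smul_neg, neg_smul] using (hq i).hasFDerivAt.neg.exp

theorem differentiable_expLoss [NormedAddCommGroup E] [NormedSpace ℝ E]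
    (hq : ∀ i, Differentiable ℝ (q i)) : Differentiable ℝ (expLoss q) := fun _ =>
  (hasFDerivAt_expLoss fun i => (hq i).differentiableAt).differentiableAt

theorem fderiv_expLoss_apply_self [NormedAddCommGroup E] [NormedSpace ℝ E] {L : ℝ}
    (hq : ∀ i, DifferentiableAt ℝ (q i) x)
    (hhom : ∀ i, ∀ α : ℝ, 0 < α → ∀ y, q i (α • y) = α ^ L * q i y) :
    fderiv ℝ (expLoss q) x x = -(L * ∑ i, q i x * exp (-q i x)) := by
  rw [(hasFDerivAt_expLoss hq).fderiv, _root_.sum_apply, Finset.mul_sum,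
    ← Finset.sum_neg_distrib]
  refine Finset.sum_congr rfl fun i _ => ?_
  rw [_root_.smul_apply, fderiv_apply_self_of_homogeneous (hhom i) (hq i), smul_eq_mul]
  ring

theorem exp_neg_le_expLoss (i : ι) : exp (-q i x) ≤ expLoss q x :=
  Finset.single_le_sum (f := fun i => exp (-q i x)) (fun _ _ => (exp_pos _).le)
    (Finset.mem_univ i)

theorem log_inv_expLoss_le (i : ι) : log (1 / expLoss q x) ≤ q i x := by
  have hpos : 0 < expLoss q x := (exp_pos _).trans_le (exp_neg_le_expLoss i)
  rw [one_div, log_inv, neg_le]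
  exact (le_log_iff_exp_le hpos).2 (exp_neg_le_expLoss i)

theorem log_inv_expLoss_mul_le :
    log (1 / expLoss q x) * expLoss q x ≤ ∑ i, q i x * exp (-q i x) := by
  rw [expLoss, Finset.mul_sum]
  exact Finset.sum_le_sum fun i _ =>
    mul_le_mul_of_nonneg_right (log_inv_expLoss_le i) (exp_pos _).le

theorem expLoss_pos [Nonempty ι] : 0 < expLoss q x :=
  Finset.sum_pos (fun _ _ => exp_pos _) Finset.univ_nonempty

theorem expLoss_zero [NormedAddCommGroup E] [NormedSpace ℝ E] {L : ℝ} (hL : L ≠ 0)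
    (hhom : ∀ i, ∀ α : ℝ, 0 < α → ∀ y, q i (α • y) = α ^ L * q i y) :
    expLoss q 0 = Fintype.card ι := by
  simp [expLoss, map_zero_of_homogeneous hL (hhom _)]

theorem ne_zero_of_expLoss_lt_one [NormedAddCommGroup E] [NormedSpace ℝ E] [Nonempty ι] {L : ℝ}
    (hL : L ≠ 0) (hhom : ∀ i, ∀ α : ℝ, 0 < α → ∀ y, q i (α • y) = α ^ L * q i y)
    (hx : expLoss q x < 1) : x ≠ 0 := by
  rintro rfl
  rw [expLoss_zero hL hhom] at hx
  exact (Nat.one_le_cast.2 Fintype.card_pos).not_gt hx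

end ExpLoss

section WeightedNorm

variable {ι : Type*} [Fintype ι] {β : ι → ℝ} {x : EuclideanSpace ℝ ι}

theorem EuclideanSpace.map_eq_sum_mul_map_single [DecidableEq ι]
    (ℓ : EuclideanSpace ℝ ι →L[ℝ] ℝ) (x : EuclideanSpace ℝ ι) :
    ℓ x = ∑ j, x j * ℓ (EuclideanSpace.single j 1) := by
  conv_lhs => rw [← (EuclideanSpace.basisFun ι ℝ).sum_repr x]
  simp [map_sum]

noncomputable def weightedSqNorm (β : ι → ℝ) (x : EuclideanSpace ℝ ι) : ℝ := ∑ j, x j ^ 2 / β j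

theorem sum_rpow_neg_half_mul_sq (hβ : ∀ j, 0 < β j) :
    ∑ j, (β j ^ (-(1 / 2) : ℝ) * x j) ^ 2 = weightedSqNorm β x := by
  refine Finset.sum_congr rfl fun j _ => ?_
  rw [mul_pow, ← rpow_natCast, ← rpow_mul (hβ j).le]
  norm_num [rpow_neg_one, div_eq_inv_mul]

theorem weightedSqNorm_pos (hβ : ∀ j, 0 < β j) (hx : x ≠ 0) : 0 < weightedSqNorm β x := by
  obtain ⟨j, hj⟩ : ∃ j, x j ≠ 0 := by
    by_contra! h
    exact hx (PiLp.ext h)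
  exact Finset.sum_pos' (fun j _ => div_nonneg (sq_nonneg _) (hβ j).le)
    ⟨j, Finset.mem_univ j, div_pos (pow_two_pos_of_ne_zero hj) (hβ j)⟩

theorem sq_map_le_weightedSqNorm_mul [DecidableEq ι] (hβ : ∀ j, 0 < β j)
    (ℓ : EuclideanSpace ℝ ι →L[ℝ] ℝ) :
    ℓ x ^ 2 ≤ weightedSqNorm β x * ∑ j, β j * ℓ (EuclideanSpace.single j 1) ^ 2 := by
  have hs : ∀ j, sqrt (β j) ^ 2 = β j := fun j => sq_sqrt (hβ j).le
  have hs0 : ∀ j, sqrt (β j) ≠ 0 := fun j => (sqrt_pos.2 (hβ j)).ne'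
  have hcs := Finset.sum_mul_sq_le_sq_mul_sq Finset.univ (fun j => x j / sqrt (β j))
    (fun j => sqrt (β j) * ℓ (EuclideanSpace.single j 1))
  simp only [div_pow, mul_pow, hs] at hcs
  calc ℓ x ^ 2
      = (∑ j, x j / sqrt (β j) * (sqrt (β j) * ℓ (EuclideanSpace.single j 1))) ^ 2 := by
        rw [EuclideanSpace.map_eq_sum_mul_map_single ℓ x]
        congr 1
        exact Finset.sum_congr rfl fun j _ => by field_simp [hs0 j]
    _ ≤ _ := hcs

theorem abs_sum_mul_le_weightedSqNorm_mul (hβ : ∀ j, 0 < β j) (w : ι → ℝ) :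
    |∑ j, x j ^ 2 / β j * w j| ≤ weightedSqNorm β x * ∑ j, |w j| := by
  have hterm : ∀ j, 0 ≤ x j ^ 2 / β j := fun j => div_nonneg (sq_nonneg _) (hβ j).le
  calc |∑ j, x j ^ 2 / β j * w j| ≤ ∑ j, x j ^ 2 / β j * |w j| := by
        refine (Finset.abs_sum_le_sum_abs _ _).trans_eq (Finset.sum_congr rfl fun j _ => ?_)
        rw [abs_mul, abs_of_nonneg (hterm j)]
    _ ≤ ∑ j, weightedSqNorm β x * |w j| := by
        refine Finset.sum_le_sum fun j _ => mul_le_mul_of_nonneg_right ?_ (abs_nonneg _)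
        exact Finset.single_le_sum (fun j _ => hterm j) (Finset.mem_univ j)
    _ = weightedSqNorm β x * ∑ j, |w j| := (Finset.mul_sum _ _ _).symm

end WeightedNorm

structure IsAdaptiveGradientFlowOn {ι : Type*} [Fintype ι] [DecidableEq ι]
    (f : EuclideanSpace ℝ ι → ℝ) (v : ℝ → EuclideanSpace ℝ ι) (β β' : ℝ → ι → ℝ)
    (s : Set ℝ) : Prop where
  rate_pos : ∀ t ∈ s, ∀ j, 0 < β t j
  hasDerivWithinAt_rate : ∀ t ∈ s, ∀ j, HasDerivWithinAt (fun u => β u j) (β' t j) s t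
  hasDerivWithinAt_coord : ∀ t ∈ s, ∀ j, HasDerivWithinAt (fun u => v u j)
    (-(β t j) * fderiv ℝ f (v t) (EuclideanSpace.single j 1)) s t

namespace IsAdaptiveGradientFlowOn

variable {ι : Type*} [Fintype ι] [DecidableEq ι] {f : EuclideanSpace ℝ ι → ℝ}
  {v : ℝ → EuclideanSpace ℝ ι} {β β' : ℝ → ι → ℝ} {s : Set ℝ} {t : ℝ}

theorem hasDerivWithinAt (hv : IsAdaptiveGradientFlowOn f v β β' s) (ht : t ∈ s) :
    HasDerivWithinAt v
      (WithLp.toLp 2 fun j => -(β t j) * fderiv ℝ f (v t) (EuclideanSpace.single j 1)) s t := by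
  have h := (PiLp.hasFDerivAt_toLp (𝕜 := ℝ) 2 (v t).ofLp).comp_hasDerivWithinAt t
    (hasDerivWithinAt_pi.2 (hv.hasDerivWithinAt_coord t ht))
  exact h

theorem hasDerivWithinAt_comp (hv : IsAdaptiveGradientFlowOn f v β β' s) (ht : t ∈ s)
    (hf : DifferentiableAt ℝ f (v t)) :
    HasDerivWithinAt (fun u => f (v u))
      (-∑ j, β t j * fderiv ℝ f (v t) (EuclideanSpace.single j 1) ^ 2) s t := by
  refine (hf.hasFDerivAt.comp_hasDerivWithinAt t (hv.hasDerivWithinAt ht)).congr_deriv ?_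
  rw [EuclideanSpace.map_eq_sum_mul_map_single, ← Finset.sum_neg_distrib]
  exact Finset.sum_congr rfl fun j _ => by rw [WithLp.ofLp_toLp]; ring

theorem antitoneOn_comp (hv : IsAdaptiveGradientFlowOn f v β β' s) (hs : Convex ℝ s)
    (hf : Differentiable ℝ f) : AntitoneOn (fun u => f (v u)) s := by
  have hd := fun t ht => hv.hasDerivWithinAt_comp (t := t) ht (hf _)
  refine antitoneOn_of_hasDerivWithinAt_nonpos hs (fun t ht => (hd t ht).continuousWithinAt)
    (fun t ht => (hd t (interior_subset ht)).mono interior_subset) fun t ht => ?_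
  exact neg_nonpos.2 <| Finset.sum_nonneg fun j _ =>
    mul_nonneg (hv.rate_pos t (interior_subset ht) j).le (sq_nonneg _)

theorem hasDerivWithinAt_weightedSqNorm (hv : IsAdaptiveGradientFlowOn f v β β' s)
    (ht : t ∈ s) :
    HasDerivWithinAt (fun u => weightedSqNorm (β u) (v u))
      (-2 * fderiv ℝ f (v t) (v t) - ∑ j, v t j ^ 2 / β t j * (β' t j / β t j)) s t := by
  have hterm := fun j => ((hv.hasDerivWithinAt_coord t ht j).pow 2).div
    (hv.hasDerivWithinAt_rate t ht j) (hv.rate_pos t ht j).ne'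
  refine (HasDerivWithinAt.fun_sum fun j (_ : j ∈ Finset.univ) => hterm j).congr_deriv ?_
  rw [EuclideanSpace.map_eq_sum_mul_map_single, Finset.mul_sum, ← Finset.sum_sub_distrib]
  refine Finset.sum_congr rfl fun j _ => ?_
  simp only [Pi.pow_apply]
  field_simp [(hv.rate_pos t ht j).ne']
  push_cast
  ring

end IsAdaptiveGradientFlowOn

noncomputable def logSurrogateMargin {ι κ : Type*} [Fintype ι] [Fintype κ] (L : ℝ)
    (q : κ → EuclideanSpace ℝ ι → ℝ) (β : ι → ℝ) (x : EuclideanSpace ℝ ι) : ℝ :=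
  log (log (1 / expLoss q x)) - L / 2 * log (weightedSqNorm β x)

-- `a = log (1 / L̃)`, `G = L̃`, `R = ρ²`, `Q = ∑ β_j (∂_j L̃)²`, `P = ∑ q_i e^{-q_i}`, and `D` is
-- the contribution of `β'` to `(ρ²)'`.
theorem neg_half_mul_le_logSurrogateMargin_deriv {L a G R Q P D b : ℝ} (hL : 0 < L) (ha : 0 < a)
    (hG : 0 < G) (hR : 0 < R) (haP : a * G ≤ P) (hCS : (L * P) ^ 2 ≤ R * Q)
    (hD : |D| ≤ R * b) :
    -(L / 2 * b) ≤ Q / G / a - L / 2 * ((2 * (L * P) - D) / R) := by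
  have hP : 0 < P := (mul_pos ha hG).trans_le haP
  have hmain : L ^ 2 * P / R ≤ Q / G / a := by
    rw [div_div, div_le_div_iff₀ hR (mul_pos hG ha)]
    nlinarith [mul_le_mul_of_nonneg_left haP (by positivity : 0 ≤ L ^ 2 * P)]
  have hcorr : -D / R ≤ b := by
    rw [div_le_iff₀ hR]
    linarith [neg_abs_le D]
  have hsplit : L / 2 * ((2 * (L * P) - D) / R) = L ^ 2 * P / R + L / 2 * (-D / R) := by
    field_simp
    ring
  rw [hsplit]
  nlinarith [mul_le_mul_of_nonneg_left hcorr (by positivity : 0 ≤ L / 2)]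

theorem IsAdaptiveGradientFlowOn.exists_hasDerivWithinAt_logSurrogateMargin {ι κ : Type*}
    [Fintype ι] [DecidableEq ι] [Fintype κ] [Nonempty κ] {q : κ → EuclideanSpace ℝ ι → ℝ}
    {v : ℝ → EuclideanSpace ℝ ι} {β β' : ℝ → ι → ℝ} {s : Set ℝ} {t L : ℝ} (hL : 0 < L)
    (hq : ∀ i, Differentiable ℝ (q i))
    (hhom : ∀ i, ∀ α : ℝ, 0 < α → ∀ y, q i (α • y) = α ^ L * q i y)
    (hv : IsAdaptiveGradientFlowOn (expLoss q) v β β' s) (ht : t ∈ s)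
    (hloss : expLoss q (v t) < 1) (hvt : v t ≠ 0) :
    ∃ d, HasDerivWithinAt (fun u => logSurrogateMargin L q (β u) (v u)) d s t ∧
      -(L / 2 * ∑ j, |β' t j / β t j|) ≤ d := by
  have hqt : ∀ i, DifferentiableAt ℝ (q i) (v t) := fun i => (hq i).differentiableAt
  have hβt := hv.rate_pos t ht
  have hG : 0 < expLoss q (v t) := expLoss_pos
  have ha : 0 < log (1 / expLoss q (v t)) := log_pos (one_lt_one_div hG hloss)
  have hEuler := fderiv_expLoss_apply_self hqt hhom
  have hlogLoss : HasDerivWithinAt (fun u => log (1 / expLoss q (v u)))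
      ((∑ j, β t j * fderiv ℝ (expLoss q) (v t) (EuclideanSpace.single j 1) ^ 2) /
        expLoss q (v t)) s t := by
    simp only [one_div, log_inv]
    exact ((hv.hasDerivWithinAt_comp ht (differentiable_expLoss hq _)).log hG.ne').fun_neg
      |>.congr_deriv (by rw [neg_div, neg_neg])
  have hsqNorm := hv.hasDerivWithinAt_weightedSqNorm ht
  rw [hEuler, neg_mul_neg] at hsqNorm
  refine ⟨_, (hlogLoss.log ha.ne').sub
    ((hsqNorm.log (weightedSqNorm_pos hβt hvt).ne').const_mul (L / 2)), ?_⟩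
  refine neg_half_mul_le_logSurrogateMargin_deriv hL ha hG (weightedSqNorm_pos hβt hvt)
    log_inv_expLoss_mul_le ?_ (abs_sum_mul_le_weightedSqNorm_mul hβt _)
  rw [← neg_sq, ← hEuler]
  exact sq_map_le_weightedSqNorm_mul hβt _

theorem sub_le_intervalIntegral_of_forall_hasDerivWithinAt {φ b : ℝ → ℝ} {a t : ℝ}
    (hat : a ≤ t) (hφ : ∀ x ∈ Icc a t, ∃ d, HasDerivWithinAt φ d (Ici a) x ∧ -b x ≤ d)
    (hb : IntegrableOn b (Icc a t)) : φ a - φ t ≤ ∫ x in a..t, b x := by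
  choose! d hd hdb using hφ
  have h := intervalIntegral.integral_le_sub_of_hasDeriv_right_of_le hat
    (fun x hx => (hd x hx).continuousWithinAt.mono Icc_subset_Ici_self)
    (fun x hx => ((hd x (Ioo_subset_Icc_self hx)).hasDerivAt (Ici_mem_nhds hx.1)).hasDerivWithinAt)
    hb.neg fun x hx => hdb x (Ioo_subset_Icc_self hx)
  rw [Pi.neg_def, intervalIntegral.integral_neg] at h
  linarith

theorem exists_forall_intervalIntegral_le {b : ℝ → ℝ} {a ε : ℝ} (hb : IntegrableOn b (Ioi a))
    (hb0 : ∀ x, 0 ≤ b x) (hε : 0 < ε) :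
    ∃ t₁, a ≤ t₁ ∧ ∀ t, t₁ ≤ t → ∫ x in t₁..t, b x ≤ ε := by
  obtain ⟨t₁, ht₁, htail⟩ := ((eventually_ge_atTop a).and
    ((tendsto_integral_Ioi_zero (f := b) tendsto_id).eventually (ge_mem_nhds hε))).exists
  refine ⟨t₁, ht₁, fun t ht => ?_⟩
  rw [intervalIntegral.integral_of_le ht]
  exact (setIntegral_mono_set (hb.mono_set (Ioi_subset_Ioi ht₁))
    (Eventually.of_forall hb0) Ioc_subset_Ioi_self.eventuallyLE).trans htail

theorem div_sqrt_rpow_eq_exp {a R L : ℝ} (ha : 0 < a) (hR : 0 < R) :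
    a / sqrt R ^ L = exp (log a - L / 2 * log R) := by
  rw [exp_sub, exp_log ha, rpow_def_of_pos (sqrt_pos.2 hR), log_sqrt hR.le]
  ring_nf

theorem surrogate_margin_lower_bound_general (p N : ℕ) (hN : 1 ≤ N)
    (L : ℝ) (hL : 0 < L)
    (q : Fin N → EuclideanSpace ℝ (Fin p) → ℝ)
    (hq : ∀ i, ContDiff ℝ 1 (q i))
    (hhom : ∀ i, ∀ α : ℝ, 0 < α → ∀ v, q i (α • v) = α ^ L * q i v)
    (Ltil : EuclideanSpace ℝ (Fin p) → ℝ)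
    (hLtil : ∀ x, Ltil x = ∑ i, Real.exp (-(q i x)))
    (v : ℝ → EuclideanSpace ℝ (Fin p))
    (β β' : ℝ → Fin p → ℝ)
    (hβpos : ∀ t ∈ Set.Ici (0:ℝ), ∀ j, 0 < β t j)
    (hβderiv : ∀ j, ∀ t ∈ Set.Ici (0:ℝ),
      HasDerivWithinAt (fun s => β s j) (β' t j) (Set.Ici 0) t)
    (hβint : ∀ j, IntegrableOn (fun t => |β' t j / β t j|) (Set.Ici 0))
    (hflow : ∀ j, ∀ t ∈ Set.Ici (0:ℝ),
      HasDerivWithinAt (fun s => v s j)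
        (-(β t j) * fderiv ℝ Ltil (v t) (EuclideanSpace.single j 1)) (Set.Ici 0) t)
    (t₀ : ℝ) (ht₀ : 0 ≤ t₀) (hsep : Ltil (v t₀) < 1)
    (ρ γ : ℝ → ℝ)
    (hρ : ∀ t, ρ t = Real.sqrt (∑ j, ((β t j) ^ (-(1/2) : ℝ) * v t j) ^ 2))
    (hγ : ∀ t, γ t = Real.log (1 / Ltil (v t)) / (ρ t) ^ L) :
    ∃ t₁, t₀ ≤ t₁ ∧ ∀ t, t₁ ≤ t → Real.exp (-(1/2)) * γ t₁ ≤ γ t := by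
  obtain rfl : Ltil = expLoss q := funext hLtil
  have : Nonempty (Fin N) := ⟨⟨0, hN⟩⟩
  have hqd : ∀ i, Differentiable ℝ (q i) := fun i => (hq i).differentiable one_ne_zero
  have hv : IsAdaptiveGradientFlowOn (expLoss q) v β β' (Ici 0) :=
    ⟨hβpos, fun t ht j => hβderiv j t ht, fun t ht j => hflow j t ht⟩
  have hloss : ∀ t, t₀ ≤ t → expLoss q (v t) < 1 := fun t ht =>
    (hv.antitoneOn_comp (convex_Ici 0) (differentiable_expLoss hqd) ht₀ (ht₀.trans ht) ht).trans_lt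
      hsep
  have hv0 : ∀ t, t₀ ≤ t → v t ≠ 0 := fun t ht =>
    ne_zero_of_expLoss_lt_one hL.ne' hhom (hloss t ht)
  set b := fun t => L / 2 * ∑ j, |β' t j / β t j|
  have hb : IntegrableOn b (Ici 0) := (integrable_finsetSum _ fun j _ => hβint j).const_mul _
  obtain ⟨t₁, ht₀₁, hb₁⟩ := exists_forall_intervalIntegral_le
    (hb.mono_set (Ioi_subset_Ici ht₀)) (fun t => by positivity) one_half_pos
  have hγexp : ∀ t, t₀ ≤ t → γ t = exp (logSurrogateMargin L q (β t) (v t)) := fun t ht => by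
    have ht0 : t ∈ Ici (0 : ℝ) := ht₀.trans ht
    rw [hγ, hρ, sum_rpow_neg_half_mul_sq (hβpos t ht0)]
    exact div_sqrt_rpow_eq_exp (log_pos (one_lt_one_div expLoss_pos (hloss t ht)))
      (weightedSqNorm_pos (hβpos t ht0) (hv0 t ht))
  refine ⟨t₁, ht₀₁, fun t ht => ?_⟩
  have hφ := sub_le_intervalIntegral_of_forall_hasDerivWithinAt ht (fun x hx =>
    (hv.exists_hasDerivWithinAt_logSurrogateMargin hL hqd hhom (ht₀.trans (ht₀₁.trans hx.1))
      (hloss x (ht₀₁.trans hx.1)) (hv0 x (ht₀₁.trans hx.1))).imp fun _ hd =>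
        ⟨hd.1.mono (Ici_subset_Ici.2 (ht₀.trans ht₀₁)), hd.2⟩)
    (hb.mono_set (Icc_subset_Ici_self.trans (Ici_subset_Ici.2 (ht₀.trans ht₀₁))))
  rw [hγexp t₁ ht₀₁, hγexp t (ht₀₁.trans ht), ← exp_add]
  exact exp_le_exp.2 (by linarith [hb₁ t ht])

/-- Along an adaptive gradient flow for the exponential-loss empirical risk of
`L`-homogeneous `C¹` functions `q i` satisfying the separability assumption, the
surrogate margin `γ̃(t) = log(1/L̃(v t)) / ρ(t)^L`, with surrogate norm
`ρ(t) = ‖β(t)^{-1/2} ⊙ v(t)‖`, satisfies `γ̃(t) ≥ e^{-1/2} γ̃(t₁)` for all `t ≥ t₁`,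
for some time `t₁ ≥ t₀`. -/
theorem surrogate_margin_lower_bound (p N : ℕ) (hp : 1 ≤ p) (hN : 1 ≤ N)
    (L : ℝ) (hL : 0 < L)
    (q : Fin N → EuclideanSpace ℝ (Fin p) → ℝ)
    (hq : ∀ i, ContDiff ℝ 1 (q i))
    (hhom : ∀ i, ∀ α : ℝ, 0 < α → ∀ v, q i (α • v) = α ^ L * q i v)
    (Ltil : EuclideanSpace ℝ (Fin p) → ℝ)
    (hLtil : ∀ x, Ltil x = ∑ i, Real.exp (-(q i x)))
    (v : ℝ → EuclideanSpace ℝ (Fin p))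
    (β β' : ℝ → Fin p → ℝ)
    (hβpos : ∀ t ∈ Set.Ici (0:ℝ), ∀ j, 0 < β t j)
    (hβderiv : ∀ j, ∀ t ∈ Set.Ici (0:ℝ),
      HasDerivWithinAt (fun s => β s j) (β' t j) (Set.Ici 0) t)
    (hβ'cont : ∀ j, ContinuousOn (fun t => β' t j) (Set.Ici 0))
    (hβlim : ∀ j, Tendsto (fun t => β t j) atTop (nhds 1))
    (hβint : ∀ j, IntegrableOn (fun t => |β' t j / β t j|) (Set.Ici 0))
    (hflow : ∀ j, ∀ t ∈ Set.Ici (0:ℝ),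
      HasDerivWithinAt (fun s => v s j)
        (-(β t j) * fderiv ℝ Ltil (v t) (EuclideanSpace.single j 1)) (Set.Ici 0) t)
    (t₀ : ℝ) (ht₀ : 0 ≤ t₀) (hsep : Ltil (v t₀) < 1)
    (ρ γ : ℝ → ℝ)
    (hρ : ∀ t, ρ t = Real.sqrt (∑ j, ((β t j) ^ (-(1/2) : ℝ) * v t j) ^ 2))
    (hγ : ∀ t, γ t = Real.log (1 / Ltil (v t)) / (ρ t) ^ L) :
    ∃ t₁, t₀ ≤ t₁ ∧ ∀ t, t₁ ≤ t → Real.exp (-(1/2)) * γ t₁ ≤ γ t :=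
  surrogate_margin_lower_bound_general p N hN L hL q hq hhom Ltil hLtil v β β' hβpos hβderiv hβint
    hflow t₀ ht₀ hsep ρ γ hρ hγ
end

section
/- Let L : ℝ^p → ℝ be nonnegative and differentiable with M-Lipschitz gradient for some M > 0. Fix ε > 0 and η̃ > 0, and let the AdaGrad iterates w : ℕ → ℝ^p satisfy w(t+1) = w(t) − η_t (h(t) ⊙ ∇L(w(t))), where h_j(t) = (ε + Σ_{τ=0}^{t} (∂_j L(w(τ)))²)^{−1/2} and the step sizes satisfy η̃ ≤ η_t and η_t · M · h_j(t) ≤ 1 for every j and every t. Then Σ_{t=0}^{∞} ‖∇L(w(t))‖² < ∞; in particular, for every coordinate j the conditioner h_j(t) converges as t → ∞ to a strictly positive limit. -/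
/-!
A gradient with Lipschitz constant `M` gives the descent inequality
`L (x + d) ≤ L x + ⟪∇L x, d⟫ + M/2 ‖d‖²`; with the step condition `η_t M h_j(t) ≤ 1` each
AdaGrad step therefore decreases `L` by at least `η̃/2 · Σ_j h_j(t) (∂_j L)²`. Since `L ≥ 0`,
these decrements are summable. Writing `S_t = ε + Σ_{τ<t} a_τ` with `a = (∂_j L)²`, we have
`h_j(t) a_t = a_t / √S_{t+1} ≥ √S_{t+1} - √S_t`, so the bound telescopes to a bound on `√S_t`:
the partial sums of `a` stay bounded, and `h_j(t) = 1/√S_{t+1}` converges to `1/√(ε + Σ a) > 0`.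
-/

open Filter Topology Finset

theorem le_add_inner_gradient_add_sq_of_lipschitz_gradient {F : Type*} [NormedAddCommGroup F]
    [InnerProductSpace ℝ F] [CompleteSpace F] {L : F → ℝ} {M : ℝ}
    (hdiff : Differentiable ℝ L)
    (hlip : ∀ x y, ‖gradient L x - gradient L y‖ ≤ M * ‖x - y‖) (x d : F) :
    L (x + d) ≤ L x + inner ℝ (gradient L x) d + M / 2 * ‖d‖ ^ 2 := by
  -- `g` is antitone on `[0, 1]`: its derivative is `⟪∇L (x + s • d) - ∇L x, d⟫ - M s ‖d‖² ≤ 0`.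
  set g : ℝ → ℝ := fun s =>
    L (x + s • d) - s * inner ℝ (gradient L x) d - M / 2 * s ^ 2 * ‖d‖ ^ 2
  have hline : ∀ s : ℝ, HasDerivAt (fun s : ℝ => x + s • d) d s := fun s => by
    simpa using ((hasDerivAt_id s).smul_const d).const_add x
  have hg : ∀ s : ℝ, HasDerivAt g (inner ℝ (gradient L (x + s • d) - gradient L x) d
      - M * s * ‖d‖ ^ 2) s := by
    intro s
    have hL := (hdiff (x + s • d)).hasGradientAt.hasFDerivAt.comp_hasDerivAt s (hline s)
    refine ((hL.sub ((hasDerivAt_id s).mul_const (inner ℝ (gradient L x) d))).sub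
      (((hasDerivAt_pow 2 s).const_mul (M / 2)).mul_const (‖d‖ ^ 2))).congr_deriv ?_
    rw [inner_sub_left, InnerProductSpace.toDual_apply_apply]
    ring
  have hanti : AntitoneOn g (Set.Icc 0 1) := by
    refine antitoneOn_of_hasDerivWithinAt_nonpos (convex_Icc 0 1)
      (fun s _ => (hg s).continuousAt.continuousWithinAt)
      (fun s _ => (hg s).hasDerivWithinAt) fun s hs => ?_
    rw [interior_Icc] at hs
    calc inner ℝ (gradient L (x + s • d) - gradient L x) d - M * s * ‖d‖ ^ 2
        ≤ M * ‖x + s • d - x‖ * ‖d‖ - M * s * ‖d‖ ^ 2 := by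
          gcongr
          exact (real_inner_le_norm _ _).trans (by gcongr; exact hlip _ _)
      _ = 0 := by
          rw [add_sub_cancel_left, norm_smul, Real.norm_of_nonneg hs.1.le]
          ring
  have hg01 := hanti (by simp) (by simp) zero_le_one
  simp [g] at hg01 ⊢
  linarith

theorem le_sub_sum_of_diagonal_gradient_step {ι : Type*} [Fintype ι]
    {L : EuclideanSpace ℝ ι → ℝ} {M : ℝ} (hdiff : Differentiable ℝ L)
    (hlip : ∀ x y, ‖gradient L x - gradient L y‖ ≤ M * ‖x - y‖)
    (x : EuclideanSpace ℝ ι) {η : ℝ} {h : ι → ℝ} (hη : 0 ≤ η) (hh : ∀ j, 0 ≤ h j)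
    (hstep : ∀ j, η * M * h j ≤ 1) :
    L (x - η • (EuclideanSpace.equiv ι ℝ).symm (fun j => h j * gradient L x j)) ≤
      L x - η / 2 * ∑ j, h j * gradient L x j ^ 2 := by
  set v := η • (EuclideanSpace.equiv ι ℝ).symm (fun j => h j * gradient L x j)
  have hv : ∀ j, v j = η * (h j * gradient L x j) := fun j => rfl
  have hinner : inner ℝ (gradient L x) (-v) = ∑ j, -(η * (h j * gradient L x j ^ 2)) := by
    rw [inner_neg_right, PiLp.inner_apply, ← sum_neg_distrib]
    simp only [hv, RCLike.inner_apply, conj_trivial]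
    congr! 2 with j; ring
  have hnorm : ‖-v‖ ^ 2 = ∑ j, η * h j * (η * (h j * gradient L x j ^ 2)) := by
    rw [norm_neg, EuclideanSpace.norm_sq_eq]
    simp only [hv, Real.norm_eq_abs, sq_abs]
    congr! 2 with j; ring
  calc L (x - v) ≤ L x + inner ℝ (gradient L x) (-v) + M / 2 * ‖-v‖ ^ 2 := by
        simpa [sub_eq_add_neg] using
          le_add_inner_gradient_add_sq_of_lipschitz_gradient hdiff hlip x (-v)
    _ = L x - ∑ j, (η * (h j * gradient L x j ^ 2)
          - M / 2 * (η * h j * (η * (h j * gradient L x j ^ 2)))) := by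
        rw [hinner, hnorm, sum_sub_distrib, mul_sum, sum_neg_distrib]
        ring
    _ ≤ L x - ∑ j, η / 2 * (h j * gradient L x j ^ 2) := by
        gcongr with j
        -- `η M h_j ≤ 1` makes the quadratic term at most half the linear one.
        have := mul_le_mul_of_nonneg_right (hstep j)
          (mul_nonneg hη (mul_nonneg (hh j) (sq_nonneg (gradient L x j))))
        linarith
    _ = L x - η / 2 * ∑ j, h j * gradient L x j ^ 2 := by rw [mul_sum]

theorem sum_range_le_div_of_add_mul_le {u b : ℕ → ℝ} {c : ℝ} (hc : 0 < c)
    (hu : ∀ t, 0 ≤ u t) (hstep : ∀ t, u (t + 1) + c * b t ≤ u t) (T : ℕ) :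
    ∑ t ∈ range T, b t ≤ u 0 / c := by
  rw [le_div_iff₀' hc, mul_sum]
  calc ∑ t ∈ range T, c * b t ≤ ∑ t ∈ range T, (u t - u (t + 1)) :=
        sum_le_sum fun t _ => by linarith [hstep t]
    _ = u 0 - u T := sum_range_sub' u T
    _ ≤ u 0 := by linarith [hu T]

theorem Real.sqrt_sub_sqrt_le_sub_div_sqrt {a b : ℝ} (hb : 0 ≤ b) (hba : b ≤ a) :
    √a - √b ≤ (a - b) / √a := by
  rcases (Real.sqrt_nonneg a).eq_or_lt with ha | ha
  · have ha0 : a = 0 := le_antisymm (Real.sqrt_eq_zero'.mp ha.symm) (hb.trans hba)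
    have hb0 : b = 0 := le_antisymm (ha0 ▸ hba) hb
    simp [ha0, hb0]
  rw [le_div_iff₀ ha]
  nlinarith [Real.sq_sqrt hb, Real.sq_sqrt (hb.trans hba), Real.sqrt_le_sqrt hba,
    Real.sqrt_nonneg b]

theorem sqrt_add_sum_range_le {a : ℕ → ℝ} {ε : ℝ} (hε : 0 ≤ ε) (ha : ∀ t, 0 ≤ a t)
    (T : ℕ) :
    √(ε + ∑ t ∈ range T, a t) ≤
      √ε + ∑ t ∈ range T, a t / √(ε + ∑ τ ∈ range (t + 1), a τ) := by
  set S : ℕ → ℝ := fun n => ε + ∑ t ∈ range n, a t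
  have hS : ∀ n, 0 ≤ S n := fun n => add_nonneg hε (sum_nonneg fun t _ => ha t)
  have hsucc : ∀ n, S (n + 1) = S n + a n := fun n => by simp only [S, sum_range_succ]; ring
  calc √(S T) = √(S 0) + ∑ t ∈ range T, (√(S (t + 1)) - √(S t)) := by
        rw [sum_range_sub (fun n => √(S n))]; ring
    _ ≤ √(S 0) + ∑ t ∈ range T, a t / √(S (t + 1)) := by
        gcongr with t
        refine (Real.sqrt_sub_sqrt_le_sub_div_sqrt (hS t) ?_).trans_eq ?_ <;> rw [hsucc]
        · linarith [ha t]
        · ring_nf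
    _ = √ε + ∑ t ∈ range T, a t / √(ε + ∑ τ ∈ range (t + 1), a τ) := by simp [S]

theorem summable_of_sum_range_div_sqrt_le {a : ℕ → ℝ} {ε C : ℝ} (hε : 0 ≤ ε)
    (ha : ∀ t, 0 ≤ a t)
    (hC : ∀ T, ∑ t ∈ range T, a t / √(ε + ∑ τ ∈ range (t + 1), a τ) ≤ C) :
    Summable a := by
  refine summable_of_sum_range_le ha (c := (√ε + C) ^ 2) fun T => ?_
  have hsqrt := (sqrt_add_sum_range_le hε ha T).trans (add_le_add_right (hC T) _)
  linarith [(Real.sqrt_le_iff.mp hsqrt).2]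

theorem tendsto_one_div_sqrt_add_sum_range_succ {a : ℕ → ℝ} (ha : Summable a) {ε : ℝ}
    (hpos : 0 < ε + ∑' t, a t) :
    Tendsto (fun t => 1 / √(ε + ∑ τ ∈ range (t + 1), a τ)) atTop
      (𝓝 (1 / √(ε + ∑' t, a t))) := by
  have hsum := (ha.hasSum.tendsto_sum_nat.comp (tendsto_add_atTop_nat 1)).const_add ε
  exact tendsto_const_nhds.div (Real.continuous_sqrt.continuousAt.tendsto.comp hsum)
    (Real.sqrt_pos.mpr hpos).ne'

theorem adagrad_discrete_gradients_summable_general (p : ℕ)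
    (L : EuclideanSpace ℝ (Fin p) → ℝ) (M : ℝ)
    (hL0 : ∀ x, 0 ≤ L x) (hdiff : Differentiable ℝ L)
    (hlip : ∀ x y, ‖gradient L x - gradient L y‖ ≤ M * ‖x - y‖)
    (ε : ℝ) (hε : 0 < ε) (ηtil : ℝ) (hηtil : 0 < ηtil)
    (w : ℕ → EuclideanSpace ℝ (Fin p)) (η : ℕ → ℝ)
    (h : Fin p → ℕ → ℝ)
    (hcond : ∀ j t, h j t = 1 / Real.sqrt (ε +
      ∑ τ ∈ Finset.range (t + 1), (gradient L (w τ) j) ^ 2))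
    (hstep_lb : ∀ t, ηtil ≤ η t)
    (hstep_ub : ∀ t, ∀ j, η t * M * h j t ≤ 1)
    (hupdate : ∀ t, w (t + 1) = w t - η t • (EuclideanSpace.equiv (Fin p) ℝ).symm
      (fun j => h j t * gradient L (w t) j)) :
    Summable (fun t => ‖gradient L (w t)‖ ^ 2) ∧
      ∀ j : Fin p, ∃ c : ℝ, 0 < c ∧ Tendsto (fun t => h j t) atTop (nhds c) := by
  set a : Fin p → ℕ → ℝ := fun j t => gradient L (w t) j ^ 2
  have hh : ∀ j t, 0 ≤ h j t := fun j t => by rw [hcond]; positivity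
  have hha : ∀ j t, 0 ≤ h j t * a j t := fun j t => mul_nonneg (hh j t) (sq_nonneg _)
  have hdescent : ∀ t, L (w (t + 1)) + ηtil / 2 * ∑ j, h j t * a j t ≤ L (w t) := fun t => by
    have hstep := le_sub_sum_of_diagonal_gradient_step hdiff hlip (w t)
      (hηtil.le.trans (hstep_lb t)) (hh · t) (hstep_ub t)
    rw [← hupdate] at hstep
    nlinarith [hstep_lb t, sum_nonneg fun j (_ : j ∈ univ) => hha j t]
  have hsummable : ∀ j, Summable (a j) := fun j =>
    summable_of_sum_range_div_sqrt_le hε.le (fun t => sq_nonneg _) fun T =>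
      calc ∑ t ∈ range T, a j t / √(ε + ∑ τ ∈ range (t + 1), a j τ)
          = ∑ t ∈ range T, h j t * a j t := by simp only [hcond, one_div_mul_eq_div, a]
        _ ≤ ∑ t ∈ range T, ∑ i, h i t * a i t :=
          sum_le_sum fun t _ => single_le_sum (fun i _ => hha i t) (mem_univ j)
        _ ≤ L (w 0) / (ηtil / 2) :=
          sum_range_le_div_of_add_mul_le (by positivity) (fun t => hL0 (w t)) hdescent T
  refine ⟨?_, fun j => ?_⟩
  · simp_rw [EuclideanSpace.norm_sq_eq, Real.norm_eq_abs, sq_abs]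
    exact summable_sum fun j _ => hsummable j
  · have hpos : 0 < ε + ∑' t, a j t :=
      add_pos_of_pos_of_nonneg hε (tsum_nonneg fun t => sq_nonneg _)
    refine ⟨_, one_div_pos.mpr (Real.sqrt_pos.mpr hpos), ?_⟩
    simp_rw [hcond]
    exact tendsto_one_div_sqrt_add_sum_range_succ (hsummable j) hpos

/-- For the discrete AdaGrad iterates on a nonnegative loss with `M`-Lipschitz gradient,
with step sizes bounded below by `η̃ > 0` and satisfying `η_t M h_j(t) ≤ 1`, the sum
`Σ_t ‖∇L(w(t))‖²` is finite; in particular every component of the conditioner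
`h_j(t) = (ε + Σ_{τ≤t} (∂_j L(w τ))²)^{-1/2}` converges to a strictly positive limit. -/
theorem adagrad_discrete_gradients_summable (p : ℕ)
    (L : EuclideanSpace ℝ (Fin p) → ℝ) (M : ℝ) (hM : 0 < M)
    (hL0 : ∀ x, 0 ≤ L x) (hdiff : Differentiable ℝ L)
    (hlip : ∀ x y, ‖gradient L x - gradient L y‖ ≤ M * ‖x - y‖)
    (ε : ℝ) (hε : 0 < ε) (ηtil : ℝ) (hηtil : 0 < ηtil)
    (w : ℕ → EuclideanSpace ℝ (Fin p)) (η : ℕ → ℝ)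
    (h : Fin p → ℕ → ℝ)
    (hcond : ∀ j t, h j t = 1 / Real.sqrt (ε +
      ∑ τ ∈ Finset.range (t + 1), (gradient L (w τ) j) ^ 2))
    (hstep_lb : ∀ t, ηtil ≤ η t)
    (hstep_ub : ∀ t, ∀ j, η t * M * h j t ≤ 1)
    (hupdate : ∀ t, w (t + 1) = w t - η t • (EuclideanSpace.equiv (Fin p) ℝ).symm
      (fun j => h j t * gradient L (w t) j)) :
    Summable (fun t => ‖gradient L (w t)‖ ^ 2) ∧
      ∀ j : Fin p, ∃ c : ℝ, 0 < c ∧ Tendsto (fun t => h j t) atTop (nhds c) :=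
  adagrad_discrete_gradients_summable_general p L M hL0 hdiff hlip ε hε ηtil hηtil w η h hcond
    hstep_lb hstep_ub hupdate
end

section
/- Let f, g_1, …, g_N : ℝ^d → ℝ be continuously differentiable. Suppose (x_k) is a sequence of feasible points (g_i(x_k) ≤ 0 for all i and k) converging to a point x, and suppose there are nonnegative reals ε_k, δ_k with ε_k → 0 and δ_k → 0 such that each x_k is an (ε_k, δ_k)-KKT point: there exist λ^k_1, …, λ^k_N ≥ 0 with ‖∇f(x_k) + Σ_{i=1}^N λ^k_i ∇g_i(x_k)‖ ≤ ε_k and λ^k_i · g_i(x_k) ≥ −δ_k for every i. If x satisfies the Mangasarian–Fromovitz constraint qualification — there exists a ∈ ℝ^d such that ⟨∇g_i(x), a⟩ > 0 for every i with g_i(x) = 0 — then x is a KKT point: g_i(x) ≤ 0 for all i, and there exist λ_1, …, λ_N ≥ 0 with ∇f(x) + Σ_{i=1}^N λ_i ∇g_i(x) = 0 and λ_i · g_i(x) = 0 for every i. -/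
/-!
Along the sequence, a multiplier of a constraint that is inactive at `x` is squeezed to `0` by
approximate complementarity `-δ_k ≤ λ_k g(x_k)`. Pairing approximate stationarity with the
Mangasarian–Fromovitz direction `a` shows that `∑ λ_k ⟪∇g(x_k), a⟫` stays bounded; since the
active constraints pair positively with `a` near `x`, the active multipliers stay bounded as well.
A convergent subsequence of the multipliers then passes stationarity and complementarity to the
limit.
-/

open Filter Topology
open scoped InnerProductSpace

section Lagrangian

variable {E ι : Type*} [NormedAddCommGroup E] [InnerProductSpace ℝ E] [CompleteSpace E]
  [Fintype ι]

theorem ContDiff.continuous_gradient {h : E → ℝ} (hh : ContDiff ℝ 1 h) :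
    Continuous (gradient h) :=
  (InnerProductSpace.toDual ℝ E).symm.continuous.comp (hh.continuous_fderiv one_ne_zero)

noncomputable def lagrangianGradient (f : E → ℝ) (g : ι → E → ℝ) (lam : ι → ℝ) (y : E) : E :=
  gradient f y + ∑ i, lam i • gradient (g i) y

theorem inner_lagrangianGradient (f : E → ℝ) (g : ι → E → ℝ) (lam : ι → ℝ) (y a : E) :
    ⟪lagrangianGradient f g lam y, a⟫_ℝ =
      ⟪gradient f y, a⟫_ℝ + ∑ i, lam i * ⟪gradient (g i) y, a⟫_ℝ := by
  simp only [lagrangianGradient, inner_add_left, sum_inner, real_inner_smul_left]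

variable {α : Type*} {l : Filter α} {f : E → ℝ} {g : ι → E → ℝ} {lam : α → ι → ℝ}
  {y : α → E} {x : E} {ε : α → ℝ}

theorem tendsto_lagrangianGradient (hf : ContDiff ℝ 1 f) (hg : ∀ i, ContDiff ℝ 1 (g i))
    {L : ι → ℝ} (hlam : Tendsto lam l (𝓝 L)) (hy : Tendsto y l (𝓝 x)) :
    Tendsto (fun k => lagrangianGradient f g (lam k) (y k)) l
      (𝓝 (lagrangianGradient f g L x)) :=
  (hf.continuous_gradient.tendsto x |>.comp hy).add <| tendsto_finsetSum _ fun i _ =>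
    (tendsto_pi_nhds.1 hlam i).smul ((hg i).continuous_gradient.tendsto x |>.comp hy)

theorem lagrangianGradient_eq_zero_of_tendsto (hf : ContDiff ℝ 1 f)
    (hg : ∀ i, ContDiff ℝ 1 (g i)) [l.NeBot] {L : ι → ℝ} (hlam : Tendsto lam l (𝓝 L))
    (hy : Tendsto y l (𝓝 x)) (hε : Tendsto ε l (𝓝 0))
    (hstat : ∀ k, ‖lagrangianGradient f g (lam k) (y k)‖ ≤ ε k) :
    lagrangianGradient f g L x = 0 :=
  norm_le_zero_iff.1 <|
    le_of_tendsto_of_tendsto' (tendsto_lagrangianGradient hf hg hlam hy).norm hε hstat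

theorem tendsto_sum_mul_inner_gradient (hf : ContDiff ℝ 1 f) (hy : Tendsto y l (𝓝 x))
    (hε : Tendsto ε l (𝓝 0)) (hstat : ∀ k, ‖lagrangianGradient f g (lam k) (y k)‖ ≤ ε k)
    (a : E) :
    Tendsto (fun k => ∑ i, lam k i * ⟪gradient (g i) (y k), a⟫_ℝ) l
      (𝓝 (-⟪gradient f x, a⟫_ℝ)) := by
  have hpair : Tendsto (fun k => ⟪lagrangianGradient f g (lam k) (y k), a⟫_ℝ) l (𝓝 0) :=
    squeeze_zero_norm (fun k => (norm_inner_le_norm _ _).trans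
      (mul_le_mul_of_nonneg_right (hstat k) (norm_nonneg a))) (by simpa using hε.mul_const ‖a‖)
  have hf_pair : Tendsto (fun k => ⟪gradient f (y k), a⟫_ℝ) l (𝓝 ⟪gradient f x, a⟫_ℝ) :=
    (hf.continuous_gradient.tendsto x |>.comp hy).inner tendsto_const_nhds
  simpa [inner_lagrangianGradient] using hpair.sub hf_pair

end Lagrangian

section Multipliers

variable {α ι : Type*} {l : Filter α}

theorem tendsto_zero_of_neg_le_mul {lam s δ : α → ℝ} {s₀ : ℝ} (hlam : ∀ k, 0 ≤ lam k)
    (hs : Tendsto s l (𝓝 s₀)) (hs₀ : s₀ < 0) (hδ : Tendsto δ l (𝓝 0))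
    (hcomp : ∀ k, -δ k ≤ lam k * s k) : Tendsto lam l (𝓝 0) := by
  have hbound : ∀ᶠ k in l, lam k ≤ δ k / (-s₀ / 2) := by
    filter_upwards [hs.eventually_le_const (by linarith : s₀ < s₀ / 2)] with k hk
    rw [le_div_iff₀ (by linarith)]
    nlinarith [hlam k, hcomp k]
  exact squeeze_zero' (Eventually.of_forall hlam) hbound (by simpa using hδ.div_const _)

theorem isBoundedUnder_le_of_sum_mul [Fintype ι] {lam c : α → ι → ℝ} {c₀ : ι → ℝ}
    (hlam : ∀ k i, 0 ≤ lam k i) (hc : ∀ i, Tendsto (c · i) l (𝓝 (c₀ i)))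
    (hdich : ∀ i, Tendsto (lam · i) l (𝓝 0) ∨ 0 < c₀ i)
    (hsum : IsBoundedUnder (· ≤ ·) l fun k => ∑ i, lam k i * c k i) (i : ι) :
    IsBoundedUnder (· ≤ ·) l (lam · i) := by
  have hterm : ∀ j, ∀ᶠ k in l, -1 ≤ lam k j * c k j := fun j => by
    rcases hdich j with hj | hj
    · have : Tendsto (fun k => lam k j * c k j) l (𝓝 0) := by simpa using hj.mul (hc j)
      exact this.eventually_const_le (by norm_num)
    · filter_upwards [(hc j).eventually_const_le hj] with k hk
      nlinarith [hlam k j]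
  -- The terms are eventually `≥ -1`, so one term exceeds the sum by at most `card ι`.
  have hsingle : ∀ᶠ k in l, lam k i * c k i ≤ ∑ j, lam k j * c k j + Fintype.card ι := by
    filter_upwards [eventually_all.2 hterm] with k hk
    have := Finset.single_le_sum (f := fun j => lam k j * c k j + 1)
      (fun j _ => by linarith [hk j]) (Finset.mem_univ i)
    simp only [Finset.sum_add_distrib, Finset.sum_const, Finset.card_univ, nsmul_eq_mul,
      mul_one] at this
    linarith
  rcases hdich i with hi | hi
  · exact hi.isBoundedUnder_le
  obtain ⟨B, hB⟩ := hsum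
  refine ⟨(B + Fintype.card ι) / (c₀ i / 2), eventually_map.2 ?_⟩
  filter_upwards [hsingle, eventually_map.1 hB, (hc i).eventually_const_le (by linarith : c₀ i / 2 < c₀ i)]
    with k hk hkB hkc
  rw [le_div_iff₀ (by linarith)]
  nlinarith [hlam k i]

theorem exists_tendsto_subseq_of_isBoundedUnder [Fintype ι] {u : ℕ → ι → ℝ}
    (hu : ∀ k, 0 ≤ u k) (hbdd : ∀ i, IsBoundedUnder (· ≤ ·) atTop (u · i)) :
    ∃ L, 0 ≤ L ∧ ∃ φ : ℕ → ℕ, StrictMono φ ∧ Tendsto (u ∘ φ) atTop (𝓝 L) := by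
  choose C hC using hbdd
  have hmem : ∀ᶠ k in atTop, u k ∈ Set.Icc 0 C :=
    (eventually_all.2 hC).mono fun k hk => ⟨hu k, hk⟩
  obtain ⟨L, hL, hφ⟩ := isCompact_Icc.tendsto_subseq' hmem.frequently
  exact ⟨L, hL.1, hφ⟩

end Multipliers

theorem approx_KKT_limit_is_KKT_general (d N : ℕ)
    (f : EuclideanSpace ℝ (Fin d) → ℝ) (g : Fin N → EuclideanSpace ℝ (Fin d) → ℝ)
    (hf : ContDiff ℝ 1 f) (hg : ∀ i, ContDiff ℝ 1 (g i))
    (xk : ℕ → EuclideanSpace ℝ (Fin d)) (x : EuclideanSpace ℝ (Fin d))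
    (hfeas : ∀ k, ∀ i, g i (xk k) ≤ 0)
    (hconv : Tendsto xk atTop (nhds x))
    (εk δk : ℕ → ℝ)
    (hεk : Tendsto εk atTop (nhds 0)) (hδk : Tendsto δk atTop (nhds 0))
    (hKKT : ∀ k, ∃ lam : Fin N → ℝ, (∀ i, 0 ≤ lam i) ∧
      ‖gradient f (xk k) + ∑ i, lam i • gradient (g i) (xk k)‖ ≤ εk k ∧
      ∀ i, -(δk k) ≤ lam i * g i (xk k))
    (hMFCQ : ∃ a : EuclideanSpace ℝ (Fin d), ∀ i, g i x = 0 →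
      0 < (inner ℝ (gradient (g i) x) a : ℝ)) :
    (∀ i, g i x ≤ 0) ∧ ∃ lam : Fin N → ℝ, (∀ i, 0 ≤ lam i) ∧
      gradient f x + ∑ i, lam i • gradient (g i) x = 0 ∧
      ∀ i, lam i * g i x = 0 := by
  choose lam hlam_nonneg hstat hcomp using hKKT
  obtain ⟨a, ha⟩ := hMFCQ
  have hg_tendsto i : Tendsto (fun k => g i (xk k)) atTop (𝓝 (g i x)) :=
    ((hg i).continuous.tendsto x).comp hconv
  have hgx i : g i x ≤ 0 := le_of_tendsto' (hg_tendsto i) (hfeas · i)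
  have hvanish i (hi : g i x < 0) : Tendsto (lam · i) atTop (𝓝 0) :=
    tendsto_zero_of_neg_le_mul (hlam_nonneg · i) (hg_tendsto i) hi hδk (hcomp · i)
  have hbdd : ∀ i, IsBoundedUnder (· ≤ ·) atTop (lam · i) :=
    isBoundedUnder_le_of_sum_mul hlam_nonneg
      (fun i => ((hg i).continuous_gradient.tendsto x |>.comp hconv).inner tendsto_const_nhds)
      (fun i => (hgx i).lt_or_eq.imp (hvanish i) (ha i))
      (tendsto_sum_mul_inner_gradient hf hconv hεk hstat a).isBoundedUnder_le
  obtain ⟨L, hL_nonneg, φ, hφ, hL⟩ := exists_tendsto_subseq_of_isBoundedUnder hlam_nonneg hbdd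
  refine ⟨hgx, L, hL_nonneg, ?_, fun i => ?_⟩
  · exact lagrangianGradient_eq_zero_of_tendsto hf hg hL (hconv.comp hφ.tendsto_atTop)
      (hεk.comp hφ.tendsto_atTop) fun k => hstat (φ k)
  · rcases (hgx i).lt_or_eq with hi | hi
    · rw [tendsto_nhds_unique (tendsto_pi_nhds.1 hL i) ((hvanish i hi).comp hφ.tendsto_atTop),
        zero_mul]
    · rw [hi, mul_zero]

/-- Under the Mangasarian–Fromovitz constraint qualification, a limit of
`(ε_k, δ_k)`-KKT points (with `ε_k → 0`, `δ_k → 0`) of the smooth constrained problem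
`min f` subject to `g_i ≤ 0` is a genuine KKT point. -/
theorem approx_KKT_limit_is_KKT (d N : ℕ)
    (f : EuclideanSpace ℝ (Fin d) → ℝ) (g : Fin N → EuclideanSpace ℝ (Fin d) → ℝ)
    (hf : ContDiff ℝ 1 f) (hg : ∀ i, ContDiff ℝ 1 (g i))
    (xk : ℕ → EuclideanSpace ℝ (Fin d)) (x : EuclideanSpace ℝ (Fin d))
    (hfeas : ∀ k, ∀ i, g i (xk k) ≤ 0)
    (hconv : Tendsto xk atTop (nhds x))
    (εk δk : ℕ → ℝ) (hεk_nonneg : ∀ k, 0 ≤ εk k) (hδk_nonneg : ∀ k, 0 ≤ δk k)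
    (hεk : Tendsto εk atTop (nhds 0)) (hδk : Tendsto δk atTop (nhds 0))
    (hKKT : ∀ k, ∃ lam : Fin N → ℝ, (∀ i, 0 ≤ lam i) ∧
      ‖gradient f (xk k) + ∑ i, lam i • gradient (g i) (xk k)‖ ≤ εk k ∧
      ∀ i, -(δk k) ≤ lam i * g i (xk k))
    (hMFCQ : ∃ a : EuclideanSpace ℝ (Fin d), ∀ i, g i x = 0 →
      0 < (inner ℝ (gradient (g i) x) a : ℝ)) :
    (∀ i, g i x ≤ 0) ∧ ∃ lam : Fin N → ℝ, (∀ i, 0 ≤ lam i) ∧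
      gradient f x + ∑ i, lam i • gradient (g i) x = 0 ∧
      ∀ i, lam i * g i x = 0 :=
  approx_KKT_limit_is_KKT_general d N f g hf hg xk x hfeas hconv εk δk hεk hδk hKKT hMFCQ
end
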